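/- Let (X, L) be a Pervin space, μ and ν bounded valuations on (X, L) with ν = g·μ for some g ∈ 𝓛(X, L). Then for every r ≥ 0, the signed valuation ν − r·μ has the Hahn decomposition property, with witness U := g⁻¹((r,∞]): ν(C) ≥ r·μ(C) for every crescent C ⊆ U, and ν(C) ≤ r·μ(C) for every crescent C disjoint from U. -/

import Mathlib

open scoped ENNReal NNReal

variable {X : Type*}

/-- A lattice of subsets of `X`. -/
def IsLatt (L : Set (Set X)) : Prop :=
  ∅ ∈ L ∧ Set.univ ∈ L ∧ (∀ U ∈ L, ∀ V ∈ L, U ∪ V ∈ L) ∧ (∀ U ∈ L, ∀ V ∈ L, U ∩ V ∈ L)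

/-- An ω-topology: a lattice of subsets closed under countable unions. -/
def IsOmegaTop (L : Set (Set X)) : Prop :=
  IsLatt L ∧ ∀ U : ℕ → Set X, (∀ n, U n ∈ L) → (⋃ n, U n) ∈ L

/-- A valuation on `(X, L)`: strict, monotonic, modular. -/
def IsVal (L : Set (Set X)) (ν : Set X → ℝ≥0∞) : Prop :=
  ν ∅ = 0 ∧ (∀ U ∈ L, ∀ V ∈ L, U ⊆ V → ν U ≤ ν V) ∧
    (∀ U ∈ L, ∀ V ∈ L, ν U + ν V = ν (U ∪ V) + ν (U ∩ V))

/-- ω-continuity of a valuation: it preserves suprema of monotone sequences of sets. -/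
def IsOmegaContVal (L : Set (Set X)) (ν : Set X → ℝ≥0∞) : Prop :=
  ∀ U : ℕ → Set X, (∀ n, U n ∈ L) → Monotone U → ν (⋃ n, U n) = ⨆ n, ν (U n)

/-- `𝓛(X, L)`: maps `h : X → ℝ≥0∞` with `h⁻¹((t,∞]) ∈ L` for all `t ≥ 0`. -/
def MemL (L : Set (Set X)) (h : X → ℝ≥0∞) : Prop :=
  ∀ t : ℝ≥0, {x | (t : ℝ≥0∞) < h x} ∈ L

/-- The improper Riemann integral `∫₀^∞ f(t) dt` of an antitonic map `f : ℝ≥0 → ℝ≥0∞`,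
realized as a Lebesgue integral over `(0, ∞)`. -/
noncomputable def riem (f : ℝ≥0 → ℝ≥0∞) : ℝ≥0∞ :=
  ∫⁻ t in Set.Ioi (0 : ℝ), f t.toNNReal

/-- The Choquet integral `∫ h dν = ∫₀^∞ ν(h⁻¹((t,∞])) dt`. -/
noncomputable def choquet (ν : Set X → ℝ≥0∞) (h : X → ℝ≥0∞) : ℝ≥0∞ :=
  riem fun t => ν {x | (t : ℝ≥0∞) < h x}

/-- The characteristic map of `U`. -/
noncomputable def chi (U : Set X) : X → ℝ≥0∞ :=
  U.indicator fun _ => 1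

/-- `(g·μ)(U) := ∫ χ_U·g dμ`. -/
noncomputable def densMul (g : X → ℝ≥0∞) (μ : Set X → ℝ≥0∞) (U : Set X) : ℝ≥0∞ :=
  choquet μ fun x => chi U x * g x

/-- `(g·μ)(C) = ∫₀^∞ μ(C ∩ g⁻¹((t,∞])) dt`, the explicit formula for the density valuation. -/
noncomputable def densF (g : X → ℝ≥0∞) (μ : Set X → ℝ≥0∞) (C : Set X) : ℝ≥0∞ :=
  riem fun t => μ (C ∩ {x | (t : ℝ≥0∞) < g x})

/-- The smallest algebra of subsets of `X` containing `L`. -/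
def genAlg (L : Set (Set X)) : Set (Set X) :=
  {C | ∀ A : Set (Set X),
    (L ⊆ A ∧ ∅ ∈ A ∧ (∀ S ∈ A, Sᶜ ∈ A) ∧ (∀ S ∈ A, ∀ T ∈ A, S ∪ T ∈ A)) → C ∈ A}

/-- A crescent: a difference of two elements of `L`. -/
def IsCrescent (L : Set (Set X)) (C : Set X) : Prop :=
  ∃ U ∈ L, ∃ V ∈ L, C = U \ V

/-- A signed valuation: strict and modular, real-valued. -/
def IsSignedVal (L : Set (Set X)) (ς : Set X → ℝ) : Prop :=
  ς ∅ = 0 ∧ ∀ U ∈ L, ∀ V ∈ L, ς (U ∪ V) + ς (U ∩ V) = ς U + ς V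

/-- The Hahn decomposition property of a signed valuation `ς` on `(X, L)`: stated via any
signed valuation extending `ς` to the generated algebra (such an extension is unique). -/
def HasHahn (L : Set (Set X)) (ς : Set X → ℝ) : Prop :=
  ∀ ς' : Set X → ℝ, IsSignedVal (genAlg L) ς' → (∀ U ∈ L, ς' U = ς U) →
    ∃ U ∈ L, (∀ C, IsCrescent L C → C ⊆ U → 0 ≤ ς' C) ∧
      (∀ C, IsCrescent L C → Disjoint C U → ς' C ≤ 0)

/-!
Both `ν'` and `C ↦ ∫₀^∞ μ'(C ∩ g⁻¹((t,∞])) dt` are additive on the algebra generated by `L` and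
agree on `L`, where `ν` is finite; as a crescent `U \ V` and `U ∩ V ∈ L` partition `U ∈ L`, they
agree on crescents. For a crescent `C ⊆ g⁻¹((r,∞])` the integrand equals `μ'(C)` on `[0, r]`,
giving `r μ'(C) ≤ ν'(C)`; for `C` disjoint from `g⁻¹((r,∞])` it is at most `μ'(C)` on `[0, r]`
and vanishes beyond `r`, giving `ν'(C) ≤ r μ'(C)`.
-/

open MeasureTheory

section GeneratedAlgebra

variable {L : Set (Set X)} {S T : Set X}

lemma mem_genAlg_of_mem (hS : S ∈ L) : S ∈ genAlg L :=
  fun _ hA => hA.1 hS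

lemma compl_mem_genAlg (hS : S ∈ genAlg L) : Sᶜ ∈ genAlg L :=
  fun A hA => hA.2.2.1 S (hS A hA)

lemma union_mem_genAlg (hS : S ∈ genAlg L) (hT : T ∈ genAlg L) : S ∪ T ∈ genAlg L :=
  fun A hA => hA.2.2.2 S (hS A hA) T (hT A hA)

lemma inter_mem_genAlg (hS : S ∈ genAlg L) (hT : T ∈ genAlg L) : S ∩ T ∈ genAlg L := by
  rw [← compl_compl (S ∩ T), Set.compl_inter]
  exact compl_mem_genAlg (union_mem_genAlg (compl_mem_genAlg hS) (compl_mem_genAlg hT))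

lemma IsCrescent.mem_genAlg {C : Set X} (hC : IsCrescent L C) : C ∈ genAlg L := by
  obtain ⟨U, hU, V, hV, rfl⟩ := hC
  exact inter_mem_genAlg (mem_genAlg_of_mem hU) (compl_mem_genAlg (mem_genAlg_of_mem hV))

lemma MemL.superlevel_mem_genAlg {g : X → ℝ≥0∞} (hg : MemL L g) (t : ℝ≥0) :
    {x | (t : ℝ≥0∞) < g x} ∈ genAlg L :=
  mem_genAlg_of_mem (hg t)

end GeneratedAlgebra

def IsAdditiveOn (A : Set (Set X)) (κ : Set X → ℝ≥0∞) : Prop :=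
  ∀ S ∈ A, ∀ T ∈ A, Disjoint S T → κ (S ∪ T) = κ S + κ T

lemma IsVal.isAdditiveOn {A : Set (Set X)} {κ : Set X → ℝ≥0∞} (hκ : IsVal A κ) :
    IsAdditiveOn A κ := by
  intro S hS T hT hST
  rw [hκ.2.2 S hS T hT, hST.inter_eq, hκ.1, add_zero]

lemma IsCrescent.eq_of_isAdditiveOn {L : Set (Set X)} (hL : IsLatt L)
    {κ₁ κ₂ : Set X → ℝ≥0∞} (h₁ : IsAdditiveOn (genAlg L) κ₁) (h₂ : IsAdditiveOn (genAlg L) κ₂)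
    (heq : ∀ U ∈ L, κ₁ U = κ₂ U) (hfin : ∀ U ∈ L, κ₁ U ≠ ⊤) {C : Set X}
    (hC : IsCrescent L C) : κ₁ C = κ₂ C := by
  have hCA := hC.mem_genAlg
  obtain ⟨U, hU, V, hV, rfl⟩ := hC
  have hW : U ∩ V ∈ L := hL.2.2.2 U hU V hV
  have hsplit : ∀ κ : Set X → ℝ≥0∞, IsAdditiveOn (genAlg L) κ →
      κ (U \ V) + κ (U ∩ V) = κ U := fun κ hκ => by
    rw [← hκ _ hCA _ (mem_genAlg_of_mem hW) Set.disjoint_sdiff_inter,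
      Set.sdiff_union_inter]
  refine (ENNReal.add_left_inj (hfin _ hW)).1 ?_
  rw [hsplit κ₁ h₁, heq U hU, heq _ hW, hsplit κ₂ h₂]

section Riemann

variable {f h : ℝ≥0 → ℝ≥0∞} {r : ℝ≥0} {c : ℝ≥0∞}

lemma riem_add (hf : Antitone f) : riem (fun t => f t + h t) = riem f + riem h :=
  lintegral_add_left ((hf.comp_monotone fun _ _ => Real.toNNReal_mono).measurable) _

lemma setLIntegral_Ioc_const (c : ℝ≥0∞) : ∫⁻ _t in Set.Ioc (0 : ℝ) r, c = r * c := by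
  rw [setLIntegral_const, Real.volume_Ioc, sub_zero, ENNReal.ofReal_coe_nnreal, mul_comm]

lemma mul_le_riem (hf : ∀ t ≤ r, c ≤ f t) : r * c ≤ riem f :=
  calc (r : ℝ≥0∞) * c = ∫⁻ _t in Set.Ioc (0 : ℝ) r, c := (setLIntegral_Ioc_const c).symm
    _ ≤ ∫⁻ t in Set.Ioc (0 : ℝ) r, f t.toNNReal :=
      setLIntegral_mono' measurableSet_Ioc fun _ ht =>
        hf _ (Real.toNNReal_le_iff_le_coe.2 ht.2)
    _ ≤ riem f := lintegral_mono_set Set.Ioc_subset_Ioi_self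

lemma riem_le_mul (hle : ∀ t ≤ r, f t ≤ c) (hzero : ∀ t, r < t → f t = 0) :
    riem f ≤ r * c := by
  have htail : ∫⁻ t in Set.Ioi (r : ℝ), f t.toNNReal = 0 := by
    rw [setLIntegral_congr_fun measurableSet_Ioi (fun _ ht =>
      hzero _ (Real.lt_toNNReal_iff_coe_lt.2 ht)), lintegral_zero]
  have hsplit : riem f =
      (∫⁻ t in Set.Ioc (0 : ℝ) r, f t.toNNReal) + ∫⁻ t in Set.Ioi (r : ℝ), f t.toNNReal := by
    rw [riem, ← Set.Ioc_union_Ioi_eq_Ioi r.coe_nonneg,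
      lintegral_union measurableSet_Ioi Set.Ioc_disjoint_Ioi_same]
  calc riem f = ∫⁻ t in Set.Ioc (0 : ℝ) r, f t.toNNReal := by rw [hsplit, htail, add_zero]
    _ ≤ ∫⁻ _t in Set.Ioc (0 : ℝ) r, c :=
      setLIntegral_mono measurable_const fun _ ht => hle _ (Real.toNNReal_le_iff_le_coe.2 ht.2)
    _ = r * c := setLIntegral_Ioc_const c

end Riemann

section Density

variable {L : Set (Set X)} {κ : Set X → ℝ≥0∞} {g : X → ℝ≥0∞} {r : ℝ≥0} {C : Set X}

lemma antitone_inter_superlevel (hκ : IsVal (genAlg L) κ) (hg : MemL L g)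
    (hC : C ∈ genAlg L) : Antitone fun t : ℝ≥0 => κ (C ∩ {x | (t : ℝ≥0∞) < g x}) :=
  fun _ _ hst => hκ.2.1 _ (inter_mem_genAlg hC (hg.superlevel_mem_genAlg _)) _
    (inter_mem_genAlg hC (hg.superlevel_mem_genAlg _))
    (Set.inter_subset_inter_right _ fun _ hx => (ENNReal.coe_le_coe.2 hst).trans_lt hx)

lemma isAdditiveOn_densF (hκ : IsVal (genAlg L) κ) (hg : MemL L g) :
    IsAdditiveOn (genAlg L) (densF g κ) := by
  intro S hS T hT hST
  have hG := hg.superlevel_mem_genAlg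
  have hpoint : ∀ t : ℝ≥0, κ ((S ∪ T) ∩ {x | (t : ℝ≥0∞) < g x}) =
      κ (S ∩ {x | (t : ℝ≥0∞) < g x}) + κ (T ∩ {x | (t : ℝ≥0∞) < g x}) := fun t => by
    rw [Set.union_inter_distrib_right]
    exact hκ.isAdditiveOn _ (inter_mem_genAlg hS (hG t)) _ (inter_mem_genAlg hT (hG t))
      (hST.mono Set.inter_subset_left Set.inter_subset_left)
  simp only [densF, hpoint]
  exact riem_add (antitone_inter_superlevel hκ hg hS)

lemma mul_le_densF (hC : C ⊆ {x | (r : ℝ≥0∞) < g x}) : r * κ C ≤ densF g κ C :=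
  mul_le_riem fun _ ht => le_of_eq <| congrArg κ <| Eq.symm <| Set.inter_eq_left.2
    fun _ hx => (ENNReal.coe_le_coe.2 ht).trans_lt (hC hx)

lemma densF_le_mul (hκ : IsVal (genAlg L) κ) (hg : MemL L g) (hC : C ∈ genAlg L)
    (hCg : Disjoint C {x | (r : ℝ≥0∞) < g x}) : densF g κ C ≤ r * κ C := by
  refine riem_le_mul (fun t _ => ?_) fun t hrt => ?_
  · exact hκ.2.1 _ (inter_mem_genAlg hC (hg.superlevel_mem_genAlg t)) _ hC Set.inter_subset_left
  · have hempty : C ∩ {x | (t : ℝ≥0∞) < g x} = ∅ :=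
      (hCg.mono_right fun x hx => (ENNReal.coe_lt_coe.2 hrt).trans hx).inter_eq
    rw [hempty, hκ.1]

end Density

theorem stmt17_general (L : Set (Set X)) (hL : IsLatt L) (μ ν : Set X → ℝ≥0∞)
    (hνb : ν Set.univ < ⊤)
    (g : X → ℝ≥0∞) (hg : MemL L g) (heq : ∀ U ∈ L, ν U = densF g μ U) (r : ℝ≥0)
    (ν' μ' : Set X → ℝ≥0∞)
    (hν' : IsVal (genAlg L) ν') (hν'e : ∀ U ∈ L, ν' U = ν U)
    (hμ' : IsVal (genAlg L) μ') (hμ'e : ∀ U ∈ L, μ' U = μ U) :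
    (∀ C : Set X, IsCrescent L C → C ⊆ {x | (r : ℝ≥0∞) < g x} →
        (r : ℝ≥0∞) * μ' C ≤ ν' C) ∧
      (∀ C : Set X, IsCrescent L C → Disjoint C {x | (r : ℝ≥0∞) < g x} →
        ν' C ≤ (r : ℝ≥0∞) * μ' C) := by
  have hdens : ∀ U ∈ L, densF g μ U = densF g μ' U := fun U hU =>
    congrArg riem <| funext fun t => (hμ'e _ (hL.2.2.2 U hU _ (hg t))).symm
  have hfin : ∀ U ∈ L, ν' U ≠ ⊤ := fun U hU =>
    ((hν'.2.1 U (mem_genAlg_of_mem hU) _ (mem_genAlg_of_mem hL.2.1) (Set.subset_univ U)).trans_lt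
      (hν'e _ hL.2.1 ▸ hνb)).ne
  have hext : ∀ C, IsCrescent L C → ν' C = densF g μ' C := fun C hC =>
    hC.eq_of_isAdditiveOn hL hν'.isAdditiveOn (isAdditiveOn_densF hμ' hg)
      (fun U hU => by rw [hν'e U hU, heq U hU, hdens U hU]) hfin
  exact ⟨fun C hC hCg => hext C hC ▸ mul_le_densF hCg,
    fun C hC hCg => hext C hC ▸ densF_le_mul hμ' hg hC.mem_genAlg hCg⟩

/-- if `ν = g·μ` for bounded valuations, then for every `r ≥ 0` the signed
valuation `ν − r·μ` has the Hahn decomposition property with witness `g⁻¹((r,∞])`: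
`ν(C) ≥ r·μ(C)` on crescents inside the witness, `ν(C) ≤ r·μ(C)` on crescents disjoint
from it, where crescent values are given by the unique extensions to `A(L)`. -/
theorem stmt17 (L : Set (Set X)) (hL : IsLatt L) (μ ν : Set X → ℝ≥0∞)
    (hμ : IsVal L μ) (hν : IsVal L ν)
    (hμb : μ Set.univ < ⊤) (hνb : ν Set.univ < ⊤)
    (g : X → ℝ≥0∞) (hg : MemL L g) (heq : ∀ U ∈ L, ν U = densF g μ U) (r : ℝ≥0)
    (ν' μ' : Set X → ℝ≥0∞)
    (hν' : IsVal (genAlg L) ν') (hν'e : ∀ U ∈ L, ν' U = ν U)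
    (hμ' : IsVal (genAlg L) μ') (hμ'e : ∀ U ∈ L, μ' U = μ U) :
    (∀ C : Set X, IsCrescent L C → C ⊆ {x | (r : ℝ≥0∞) < g x} →
        (r : ℝ≥0∞) * μ' C ≤ ν' C) ∧
      (∀ C : Set X, IsCrescent L C → Disjoint C {x | (r : ℝ≥0∞) < g x} →
        ν' C ≤ (r : ℝ≥0∞) * μ' C) :=
  stmt17_general L hL μ ν hνb g hg heq r ν' μ' hν' hν'e hμ' hμ'e
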